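/- arXiv:1407.6559 — 2 statements merged into one kernel-verified Lean document; each statement's English description precedes it below -/
import Mathlib

section
/- Let predecessor(i) be the number obtained from a positive integer i by setting its least significant 1-bit to 0 (i.e., predecessor(i) = i - 2^{v(i)} where v(i) is the 2-adic valuation of i). Then for any positive integers i and p, if ρ_k denotes k-fold iteration of predecessor applied to i (with ρ_0(i) = i), and ρ_{p+1}(i) = predecessor(ρ_p(i)), then ρ_p(i) - ρ_{p+1}(i) ≥ i - ρ_p(i), provided ρ_p(i) > 0. -/
/-- `predecessor i` sets the least significant 1-bit of `i` to 0:
`predecessor i = i - 2 ^ v₂(i)` where `v₂` is the 2-adic valuation. -/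
def predecessor (i : ℕ) : ℕ := i - 2 ^ (padicValNat 2 i)

/-! Writing `ρ_k = predecessor^[k] i`, the increment `ρ_k - ρ_{k+1} = 2 ^ v₂(ρ_k)` and the
valuations `v₂(ρ_k)` strictly increase. Hence `i - ρ_p` is a sum of distinct powers of two
below `2 ^ v₂(ρ_p)`, so it is less than `2 ^ v₂(ρ_p) = ρ_p - ρ_{p+1}`. -/

namespace predecessor

lemma le_self (n : ℕ) : predecessor n ≤ n := Nat.sub_le _ _

lemma pos_of_pos_predecessor {n : ℕ} (h : 0 < predecessor n) : 0 < n :=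
  h.trans_le (le_self n)

lemma sub_predecessor {n : ℕ} (hn : 0 < n) : n - predecessor n = 2 ^ padicValNat 2 n :=
  Nat.sub_sub_self (Nat.le_of_dvd hn pow_padicValNat_dvd)

lemma padicValNat_lt {n : ℕ} (h : 0 < predecessor n) :
    padicValNat 2 n < padicValNat 2 (predecessor n) := by
  have hn := pos_of_pos_predecessor h
  have hpred : predecessor n = n - 2 ^ padicValNat 2 n := rfl
  have hdvd : 2 ^ padicValNat 2 n ∣ n := pow_padicValNat_dvd
  have hndvd : ¬ 2 ^ (padicValNat 2 n + 1) ∣ n := pow_succ_padicValNat_not_dvd hn.ne'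
  generalize padicValNat 2 n = v at hpred hdvd hndvd ⊢
  obtain ⟨m, rfl⟩ := hdvd
  obtain ⟨k, rfl⟩ : Odd m := by
    rw [← Nat.not_even_iff_odd]
    rintro ⟨k, rfl⟩
    exact hndvd ⟨k, by ring⟩
  have hpred_eq : predecessor (2 ^ v * (2 * k + 1)) = 2 ^ (v + 1) * k := by
    rw [hpred, pow_succ, mul_add, mul_one, Nat.add_sub_cancel, mul_assoc]
  exact (padicValNat_dvd_iff_le h.ne').mp ⟨k, hpred_eq⟩

lemma iterate_le_self (n k : ℕ) : predecessor^[k] n ≤ n := by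
  induction k with
  | zero => rfl
  | succ k ih => rw [Function.iterate_succ_apply']; exact (le_self _).trans ih

lemma sub_iterate_lt {n : ℕ} (k : ℕ) (hpos : 0 < predecessor^[k] n) :
    n - predecessor^[k] n < 2 ^ padicValNat 2 (predecessor^[k] n) := by
  induction k with
  | zero => simp
  | succ k ih =>
    rw [Function.iterate_succ_apply'] at hpos ⊢
    set m := predecessor^[k] n
    have hm := pos_of_pos_predecessor hpos
    have hstep := sub_predecessor hm
    have hval : 2 * 2 ^ padicValNat 2 m ≤ 2 ^ padicValNat 2 (predecessor m) := by
      rw [← pow_succ']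
      exact Nat.pow_le_pow_right two_pos (padicValNat_lt hpos)
    have hm_le := iterate_le_self n k
    have hpred_le := le_self m
    have := ih hm
    omega

end predecessor

theorem stmt4_general (i p : ℕ) (hpos : 0 < predecessor^[p] i) :
    i - predecessor^[p] i ≤ predecessor^[p] i - predecessor^[p + 1] i := by
  rw [Function.iterate_succ_apply', predecessor.sub_predecessor hpos]
  exact (predecessor.sub_iterate_lt p hpos).le

/-- For positive `i` and `p`, with `ρ_k` the `k`-fold iterate of `predecessor`,
if `ρ_p(i) > 0` then `ρ_p(i) - ρ_{p+1}(i) ≥ i - ρ_p(i)`. -/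
theorem stmt4 (i p : ℕ) (hi : 0 < i) (hp : 0 < p) (hpos : 0 < predecessor^[p] i) :
    i - predecessor^[p] i ≤ predecessor^[p] i - predecessor^[p + 1] i :=
  stmt4_general i p hpos
end

section
/- In the edit-distance DAG, let ED(j,i) be the minimum weight of a path from (-1,-1) to (j,i). For any i ≥ i' and j ≥ j', if ED(j',i') > ED(j,i') - (j - j') + 2(i - i'), then no smallest-weight path from (-1,-1) to (j,i) passes through the node (j',i'). -/
/-!
A path through `(j', i')` weighs at least `ED(j', i')` plus the weight of its tail, and the
tail from `(j', i')` to `(j, i)` weighs at least `(j - j') - (i - i')`, since only down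
steps advance `j` without advancing `i`. On the other hand, extending an optimal path to
`(j, i')` by `i - i'` right steps shows `ED(j, i) ≤ ED(j, i') + (i - i')`. The hypothesis
makes the first bound exceed the second.
-/

/-
The edit-distance DAG for a fixed string `F` of length `n` and a stream `S`.
We shift the paper's coordinates by one: node `(j, i)` here corresponds to
node `(j - 1, i - 1)` of the paper, so `j ∈ {0, …, n}` and `i ∈ {0, 1, …}`,
with `(0, 0)` being the paper's `(-1, -1)`.
-/

/-- A single weighted edge of the edit-distance DAG:
right edges have weight 1 (except weight 0 on the top row, the paper's row `-1`),
down edges have weight 1, and diagonal edges have weight 0 iff the corresponding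
symbols of `F` and `S` match. -/
inductive EDStep {α : Type*} [DecidableEq α] (n : ℕ) (F : Fin n → α) (S : ℕ → α) :
    ℕ × ℕ → ℕ × ℕ → ℕ → Prop
  | right (j i : ℕ) (h : j ≤ n) :
      EDStep n F S (j, i) (j, i + 1) (if j = 0 then 0 else 1)
  | down (j i : ℕ) (h : j < n) :
      EDStep n F S (j, i) (j + 1, i) 1
  | diag (j i : ℕ) (h : j < n) :
      EDStep n F S (j, i) (j + 1, i + 1) (if F ⟨j, h⟩ = S i then 0 else 1)

/-- `EDPath n F S u v w` : there is a path in the edit-distance DAG from `u` to `v`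
of total weight `w`. -/
inductive EDPath {α : Type*} [DecidableEq α] (n : ℕ) (F : Fin n → α) (S : ℕ → α) :
    ℕ × ℕ → ℕ × ℕ → ℕ → Prop
  | nil (v : ℕ × ℕ) : EDPath n F S v v 0
  | cons {u v x : ℕ × ℕ} {a b : ℕ} :
      EDStep n F S u v a → EDPath n F S v x b → EDPath n F S u x (a + b)

/-- `ED n F S j i` : minimum weight of a path from the source `(0,0)`
(the paper's `(-1,-1)`) to node `(j, i)`. -/
noncomputable def ED {α : Type*} [DecidableEq α] (n : ℕ) (F : Fin n → α) (S : ℕ → α)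
    (j i : ℕ) : ℕ :=
  sInf {w | EDPath n F S (0, 0) (j, i) w}

namespace EDPath

variable {α : Type*} [DecidableEq α] {n : ℕ} {F : Fin n → α} {S : ℕ → α}

lemma single {u v : ℕ × ℕ} {a : ℕ} (s : EDStep n F S u v a) : EDPath n F S u v a :=
  cons s (nil v)

lemma trans {u v x : ℕ × ℕ} {a b : ℕ}
    (p : EDPath n F S u v a) (q : EDPath n F S v x b) : EDPath n F S u x (a + b) := by
  induction p with
  | nil => simpa using q
  | cons s _ ih => rw [Nat.add_assoc]; exact cons s (ih q)

lemma fst_le {u v : ℕ × ℕ} {w : ℕ} (p : EDPath n F S u v w) (hu : u.1 ≤ n) : v.1 ≤ n := by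
  induction p with
  | nil => exact hu
  | cons s _ ih =>
    apply ih
    cases s with
    | right _ _ h => exact h
    | down _ _ h => exact h
    | diag _ _ h => exact h

lemma fst_add_snd_le {u v : ℕ × ℕ} {w : ℕ} (p : EDPath n F S u v w) :
    v.1 + u.2 ≤ w + u.1 + v.2 := by
  induction p with
  | nil => omega
  | cons s _ ih =>
    cases s with
    | right => dsimp only at ih ⊢; split_ifs at * <;> omega
    | down => dsimp only at ih ⊢; omega
    | diag => dsimp only at ih ⊢; split_ifs at * <;> omega

lemma down (i : ℕ) {j k : ℕ} (hjk : j ≤ k) (hk : k ≤ n) :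
    EDPath n F S (j, i) (k, i) (k - j) := by
  obtain ⟨d, rfl⟩ := Nat.exists_eq_add_of_le hjk
  rw [Nat.add_sub_cancel_left]
  induction d with
  | zero => exact nil _
  | succ d ih => exact (ih (by omega) (by omega)).trans (single (.down (j + d) i (by omega)))

lemma exists_right_le {j : ℕ} (hj : j ≤ n) {i k : ℕ} (hik : i ≤ k) :
    ∃ w ≤ k - i, EDPath n F S (j, i) (j, k) w := by
  obtain ⟨d, rfl⟩ := Nat.exists_eq_add_of_le hik
  rw [Nat.add_sub_cancel_left]
  induction d with
  | zero => exact ⟨0, le_rfl, nil _⟩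
  | succ d ih =>
    obtain ⟨w, hw, p⟩ := ih (by omega)
    refine ⟨_, ?_, p.trans (single (.right j (i + d) hj))⟩
    split_ifs <;> omega

end EDPath

section ED

variable {α : Type*} [DecidableEq α] {n : ℕ} {F : Fin n → α} {S : ℕ → α}

lemma ED_le {j i w : ℕ} (p : EDPath n F S (0, 0) (j, i) w) : ED n F S j i ≤ w :=
  Nat.sInf_le p

lemma EDPath.to_ED {j i w : ℕ} (p : EDPath n F S (0, 0) (j, i) w) :
    EDPath n F S (0, 0) (j, i) (ED n F S j i) :=
  Nat.sInf_mem ⟨w, p⟩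

lemma ED_le_ED_add {j i j₂ i₂ w w₂ : ℕ} (p : EDPath n F S (0, 0) (j, i) w)
    (q : EDPath n F S (j, i) (j₂, i₂) w₂) : ED n F S j₂ i₂ ≤ ED n F S j i + w₂ :=
  ED_le (p.to_ED.trans q)

end ED

/-- If `ED(j',i') > ED(j,i') - (j - j') + 2(i - i')` then no smallest-weight path from the
source to `(j, i)` passes through `(j', i')`. -/
theorem stmt9 {α : Type*} [DecidableEq α] (n : ℕ) (F : Fin n → α) (S : ℕ → α)
    (j' i' j i : ℕ) (hj : j' ≤ j) (hi : i' ≤ i)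
    (h : (ED n F S j' i' : ℤ) >
      (ED n F S j i' : ℤ) - ((j : ℤ) - (j' : ℤ)) + 2 * ((i : ℤ) - (i' : ℤ))) :
    ¬ ∃ a b : ℕ, EDPath n F S (0, 0) (j', i') a ∧ EDPath n F S (j', i') (j, i) b ∧
      a + b = ED n F S j i := by
  rintro ⟨a, b, p, q, hab⟩
  have hjn : j ≤ n := (p.trans q).fst_le (Nat.zero_le n)
  have h₁ : ED n F S j' i' ≤ a := ED_le p
  obtain ⟨w, hw, right⟩ := EDPath.exists_right_le (F := F) (S := S) hjn hi
  have h₂ : ED n F S j i ≤ ED n F S j i' + w :=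
    ED_le_ED_add (p.trans (.down i' hj hjn)) right
  have h₃ : j + i' ≤ b + j' + i := q.fst_add_snd_le
  omega
end
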